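/- arXiv:2106.00296 — 7 statements merged into one kernel-verified Lean document; each statement's English description precedes it below -/
import Mathlib

section
/- Let j_1,...,j_b ∈ ℤ^d be nonzero vectors and set ω_k = √(j_k²+1) for k = 1,...,b. Assume that the numbers 1 and ω_k ω_{k'} for 1 ≤ k < k' ≤ b, together with ω_k for 1 ≤ k ≤ b, are linearly independent over ℚ. Let 𝒰 be the submodule of ℤ^b × ℤ^d generated by {(-e_k, j_k)}. Then for every nonzero (ν, η) ∈ 𝒰, one has (ν·ω)² − |η|² ≠ 0, where ω = (ω_1,...,ω_b). -/
theorem sq_sum_aux {n : ℕ} (a : Fin n → ℝ) :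
    (∑ i, a i) ^ 2 = ∑ i, a i ^ 2 + 2 * ∑ p : {p : Fin n × Fin n // p.1 < p.2}, a p.1.1 * a p.1.2 := by
  classical
  have h1 : (∑ i, a i) ^ 2 = ∑ p : Fin n × Fin n, a p.1 * a p.2 := by
    rw [sq, Finset.sum_mul_sum, ← Finset.univ_product_univ, Finset.sum_product]
  have hsub : ∑ p : {p : Fin n × Fin n // p.1 < p.2}, a p.1.1 * a p.1.2
      = ∑ p ∈ Finset.univ.filter (fun p : Fin n × Fin n => p.1 < p.2), a p.1 * a p.2 := by
    exact (Finset.sum_subtype (Finset.univ.filter (fun p : Fin n × Fin n => p.1 < p.2))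
      (fun x => by simp) (fun p => a p.1 * a p.2)).symm
  have hsplit : ∑ p : Fin n × Fin n, a p.1 * a p.2
      = ∑ p ∈ Finset.univ.filter (fun p : Fin n × Fin n => p.1 < p.2), a p.1 * a p.2
      + (∑ p ∈ Finset.univ.filter (fun p : Fin n × Fin n => p.1 = p.2), a p.1 * a p.2
      + ∑ p ∈ Finset.univ.filter (fun p : Fin n × Fin n => p.2 < p.1), a p.1 * a p.2) := by
    rw [← Finset.sum_filter_add_sum_filter_not Finset.univ (fun p : Fin n × Fin n => p.1 < p.2)]
    congr 1
    rw [← Finset.sum_filter_add_sum_filter_not (Finset.univ.filter _) (fun p : Fin n × Fin n => p.1 = p.2)]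
    congr 1
    · rw [Finset.filter_filter]
      apply Finset.sum_congr _ (fun _ _ => rfl)
      apply Finset.filter_congr
      intro p _
      simp only [not_lt]
      constructor
      · rintro ⟨h1, h2⟩; exact h2
      · intro h; exact ⟨le_of_eq h.symm, h⟩
    · rw [Finset.filter_filter]
      apply Finset.sum_congr _ (fun _ _ => rfl)
      apply Finset.filter_congr
      intro p _
      simp only [not_lt]
      omega
  have hdiag : ∑ p ∈ Finset.univ.filter (fun p : Fin n × Fin n => p.1 = p.2), a p.1 * a p.2
      = ∑ i, a i ^ 2 := by
    apply Finset.sum_nbij' (fun p => p.1) (fun i => (i, i)) <;> simp [sq]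
  have hswap : ∑ p ∈ Finset.univ.filter (fun p : Fin n × Fin n => p.2 < p.1), a p.1 * a p.2
      = ∑ p ∈ Finset.univ.filter (fun p : Fin n × Fin n => p.1 < p.2), a p.1 * a p.2 := by
    apply Finset.sum_nbij' (fun p => Prod.swap p) (fun p => Prod.swap p) <;> simp [mul_comm]
  rw [h1, hsub, hsplit, hdiag, hswap]; ring

/-- Lemma 2.1 (second part): with ω_k = √(j_k²+1), assuming ℚ-linear independence of
1, the ω_k, and the products ω_k ω_{k'} (k < k'), for every nonzero (ν, η) in the
submodule 𝒰 generated by {(-e_k, j_k)} one has (ν·ω)² − |η|² ≠ 0. -/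
theorem stmt2 (b d : ℕ) (j : Fin b → Fin d → ℤ) (hj : ∀ k, j k ≠ 0)
    (ω : Fin b → ℝ)
    (hω : ∀ k, ω k = Real.sqrt ((∑ i, (j k i : ℝ) ^ 2) + 1))
    (hindep : LinearIndependent ℚ
      (Sum.elim (fun _ : Unit => (1 : ℝ))
        (Sum.elim ω (fun p : {p : Fin b × Fin b // p.1 < p.2} => ω p.1.1 * ω p.1.2))))
    (U : Submodule ℤ ((Fin b → ℤ) × (Fin d → ℤ)))
    (hU : U = Submodule.span ℤ
      (Set.range fun k : Fin b => ((-(Pi.single k 1) : Fin b → ℤ), j k)))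
    (ν : Fin b → ℤ) (η : Fin d → ℤ) (hmem : (ν, η) ∈ U) (hne : (ν, η) ≠ 0) :
    (∑ i, (ν i : ℝ) * ω i) ^ 2 - (∑ i, (η i : ℝ) ^ 2) ≠ 0 := by
  classical
  subst hU
  rw [Finsupp.mem_span_range_iff_exists_finsupp] at hmem
  obtain ⟨c0, hc⟩ := hmem
  set c : Fin b → ℤ := fun k => c0 k with hcdef
  have hc' : ∑ k, c k • ((-(Pi.single k 1) : Fin b → ℤ), j k) = (ν, η) := by
    rw [← hc, Finsupp.sum_fintype]
    intro k; exact zero_smul ℤ _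
  have hν : ∀ i, ν i = -c i := by
    intro i
    have h1 := congrArg Prod.fst hc'
    simp only [Prod.fst_sum] at h1
    have := congrFun h1 i
    simp only [Finset.sum_apply, Pi.smul_apply, Pi.neg_apply, smul_eq_mul] at this
    rw [← this]
    rw [Finset.sum_eq_single i]
    · simp
    · intro k _ hk; simp [Pi.single_apply, hk]
    · simp
  have hη : ∀ i, η i = ∑ k, c k * j k i := by
    intro i
    have h1 := congrArg Prod.snd hc'
    simp only [Prod.snd_sum] at h1
    have := congrFun h1 i
    simpa using this.symm
  -- ω basics
  have hJpos : ∀ k, (0:ℝ) ≤ (∑ i, (j k i : ℝ) ^ 2) + 1 := by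
    intro k
    positivity
  have hω2 : ∀ k, ω k ^ 2 = (∑ i, (j k i : ℝ) ^ 2) + 1 := by
    intro k; rw [hω k, Real.sq_sqrt (hJpos k)]
  intro h
  set J : Fin b → ℤ := fun k => ∑ i, (j k i) ^ 2 with hJdef
  set A : ℤ := (∑ k, c k ^ 2 * (J k + 1)) - ∑ i, (η i) ^ 2 with hAdef
  -- key real identity
  have hkey : (A : ℝ) + ∑ p : {p : Fin b × Fin b // p.1 < p.2},
      ((2 * c p.1.1 * c p.1.2 : ℤ) : ℝ) * (ω p.1.1 * ω p.1.2) = 0 := by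
    rw [← h]
    have h1 : (∑ i, (ν i : ℝ) * ω i) = -∑ i, (c i : ℝ) * ω i := by
      rw [← Finset.sum_neg_distrib]
      apply Finset.sum_congr rfl
      intro i _
      rw [hν i]; push_cast; ring
    rw [h1, neg_sq, sq_sum_aux (fun i => (c i : ℝ) * ω i)]
    have h2 : ∑ i, ((c i : ℝ) * ω i) ^ 2 = ∑ k, ((c k : ℝ))^2 * ((J k : ℝ) + 1) := by
      apply Finset.sum_congr rfl
      intro k _
      rw [mul_pow, hω2 k, hJdef]
      push_cast
      ring
    have h3 : ∑ p : {p : Fin b × Fin b // p.1 < p.2},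
        ((2 * c p.1.1 * c p.1.2 : ℤ) : ℝ) * (ω p.1.1 * ω p.1.2)
        = 2 * ∑ p : {p : Fin b × Fin b // p.1 < p.2},
          ((c p.1.1 : ℝ) * ω p.1.1) * ((c p.1.2 : ℝ) * ω p.1.2) := by
      rw [Finset.mul_sum]
      apply Finset.sum_congr rfl
      intro p _
      push_cast
      ring
    rw [h3, h2, hAdef]
    push_cast
    ring
  -- apply linear independence
  rw [Fintype.linearIndependent_iff] at hindep
  set g : Unit ⊕ (Fin b ⊕ {p : Fin b × Fin b // p.1 < p.2}) → ℚ :=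
    Sum.elim (fun _ => (A : ℚ)) (Sum.elim 0 (fun p => ((2 * c p.1.1 * c p.1.2 : ℤ) : ℚ))) with hgdef
  have hg0 : ∀ x, g x = 0 := by
    apply hindep
    rw [Fintype.sum_sum_type, Fintype.sum_sum_type]
    simp only [hgdef, Sum.elim_inl, Sum.elim_inr, Pi.zero_apply, zero_smul,
      Finset.sum_const_zero, Rat.smul_one_eq_cast]
    have : ∀ p : {p : Fin b × Fin b // p.1 < p.2},
        ((2 * c p.1.1 * c p.1.2 : ℤ) : ℚ) • (ω p.1.1 * ω p.1.2)
        = ((2 * c p.1.1 * c p.1.2 : ℤ) : ℝ) * (ω p.1.1 * ω p.1.2) := by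
      intro p
      rw [Rat.smul_def]
      push_cast
      ring
    rw [Finset.sum_congr rfl (fun p _ => this p)]
    simp only [Finset.univ_unique, Finset.sum_const, Finset.card_singleton, one_smul]
    rw [zero_add]
    push_cast at hkey ⊢
    linarith [hkey]
  have hA0 : A = 0 := by
    have := hg0 (Sum.inl ())
    simp [hgdef] at this
    exact_mod_cast this
  have hcc : ∀ k k', k < k' → c k * c k' = 0 := by
    intro k k' hkk
    have := hg0 (Sum.inr (Sum.inr ⟨(k, k'), hkk⟩))
    simp [hgdef] at this
    rcases this with h' | h' <;> simp [h']
  have hccne : ∀ k k', k ≠ k' → c k * c k' = 0 := by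
    intro k k' hkk
    rcases lt_or_gt_of_ne hkk with h' | h'
    · exact hcc k k' h'
    · rw [mul_comm]; exact hcc k' k h'
  by_cases hz : ∀ k, c k = 0
  · apply hne
    ext i
    · simp [hν i, hz i]
    · simp [hη i, hz]
  · push_neg at hz
    obtain ⟨m, hm⟩ := hz
    have hzero : ∀ k, k ≠ m → c k = 0 := by
      intro k hk
      have := hccne k m hk
      rcases mul_eq_zero.1 this with h' | h'
      · exact h'
      · exact absurd h' hm
    have hηm : ∀ i, η i = c m * j m i := by
      intro i
      rw [hη i, Finset.sum_eq_single m]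
      · intro k _ hk; rw [hzero k hk]; ring
      · simp
    have hA : A = c m ^ 2 := by
      rw [hAdef]
      have h1 : (∑ k, c k ^ 2 * (J k + 1)) = c m ^ 2 * (J m + 1) := by
        rw [Finset.sum_eq_single m]
        · intro k _ hk; rw [hzero k hk]; ring
        · simp
      have h2 : (∑ i, (η i) ^ 2) = c m ^ 2 * J m := by
        rw [hJdef, Finset.mul_sum]
        apply Finset.sum_congr rfl
        intro i _
        rw [hηm i]; ring
      rw [h1, h2]; ring
    rw [hA0] at hA
    exact hm ((pow_eq_zero_iff (two_ne_zero)).1 hA.symm)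
end

section
/- Let ω ∈ ℝ^b be such that 1, ω_1,...,ω_b are linearly independent over ℚ. Let ξ = (ν, η) and ξ' = (ν', η') be elements of ℤ^b × ℤ^2 that are linearly independent over ℝ (as vectors in ℝ^{b+2}), with η and η' spanning a space of dimension exactly 1 (i.e., η, η' not both zero and linearly dependent). Then the 2×2 matrix T₊₊ with entries T₊₊[1,1] = (ν·ω)² + |η|², T₊₊[1,2] = T₊₊[2,1] = (ν·ω)(ν'·ω) + η·η', T₊₊[2,2] = (ν'·ω)² + |η'|² has nonzero determinant. -/
/-!
With `x = ν·ω` and `y = ν'·ω`, `det T₊₊` is the Gram determinant of `(x, η)` and `(y, η')` in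
`ℝ³`, a sum of squares of `2 × 2` minors; if it vanishes, these vectors are proportional. For a
coordinate `i` with `(η i, η' i) ≠ 0`, the integer vector `η i • ν' - η' i • ν` is then orthogonal
to `ω`, hence zero by the `ℚ`-independence of `ω`, so `η' i • ξ = η i • ξ'` contradicts the
independence of `ξ` and `ξ'`.
-/

theorem eq_zero_of_sum_intCast_mul_eq_zero {ι : Type*} [Fintype ι] {ω : ι → ℝ}
    (hω : LinearIndependent ℚ ω) {m : ι → ℤ} (hm : ∑ i, (m i : ℝ) * ω i = 0) : m = 0 :=
  funext <| Fintype.linearIndependent_iff.1 (hω.restrict_scalars' ℤ) m <| by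
    simpa [zsmul_eq_mul] using hm

theorem det_gram_fin_two_eq_sum_sq (x y : ℝ) (p q : Fin 2 → ℝ) :
    !![x ^ 2 + ∑ i, p i ^ 2, x * y + ∑ i, p i * q i;
       y * x + ∑ i, q i * p i, y ^ 2 + ∑ i, q i ^ 2].det =
      (x * q 0 - y * p 0) ^ 2 + (x * q 1 - y * p 1) ^ 2 + (p 0 * q 1 - p 1 * q 0) ^ 2 := by
  simp only [Matrix.det_fin_two_of, Fin.sum_univ_two]
  ring

theorem proportional_of_det_gram_fin_two_eq_zero {x y : ℝ} {p q : Fin 2 → ℝ}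
    (h : !![x ^ 2 + ∑ i, p i ^ 2, x * y + ∑ i, p i * q i;
       y * x + ∑ i, q i * p i, y ^ 2 + ∑ i, q i ^ 2].det = 0) :
    (∀ i, p i * y = q i * x) ∧ ∀ i j, p i * q j = p j * q i := by
  rw [det_gram_fin_two_eq_sum_sq] at h
  have h₀ : x * q 0 - y * p 0 = 0 := by
    nlinarith [sq_nonneg (x * q 1 - y * p 1), sq_nonneg (p 0 * q 1 - p 1 * q 0)]
  have h₁ : x * q 1 - y * p 1 = 0 := by
    nlinarith [sq_nonneg (x * q 0 - y * p 0), sq_nonneg (p 0 * q 1 - p 1 * q 0)]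
  have h₂ : p 0 * q 1 - p 1 * q 0 = 0 := by
    nlinarith [sq_nonneg (x * q 0 - y * p 0), sq_nonneg (x * q 1 - y * p 1)]
  simp only [Fin.forall_fin_two, and_true, true_and]
  refine ⟨⟨?_, ?_⟩, ?_, ?_⟩ <;> linarith

theorem stmt3_general (b : ℕ) (ω : Fin b → ℝ)
    (hindep : LinearIndependent ℚ (Fin.cons (1 : ℝ) ω : Fin (b + 1) → ℝ))
    (ν ν' : Fin b → ℤ) (η η' : Fin 2 → ℤ)
    (hξ : LinearIndependent ℝ
      ![Sum.elim (fun i => (ν i : ℝ)) (fun i => (η i : ℝ)),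
        Sum.elim (fun i => (ν' i : ℝ)) (fun i => (η' i : ℝ))])
    (hηne : η ≠ 0 ∨ η' ≠ 0) :
    Matrix.det
      !![(∑ i, (ν i : ℝ) * ω i) ^ 2 + (∑ i, (η i : ℝ) ^ 2),
         (∑ i, (ν i : ℝ) * ω i) * (∑ i, (ν' i : ℝ) * ω i) + (∑ i, (η i : ℝ) * (η' i : ℝ));
         (∑ i, (ν' i : ℝ) * ω i) * (∑ i, (ν i : ℝ) * ω i) + (∑ i, (η' i : ℝ) * (η i : ℝ)),
         (∑ i, (ν' i : ℝ) * ω i) ^ 2 + (∑ i, (η' i : ℝ) ^ 2)] ≠ 0 := by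
  intro hdet
  obtain ⟨hνω, hηη'⟩ := proportional_of_det_gram_fin_two_eq_zero hdet
  obtain ⟨i, hi⟩ : ∃ i, η i ≠ 0 ∨ η' i ≠ 0 := by
    rcases hηne with h | h <;> obtain ⟨i, hi⟩ := Function.ne_iff.1 h
    exacts [⟨i, .inl hi⟩, ⟨i, .inr hi⟩]
  have hω : LinearIndependent ℚ ω := hindep.comp Fin.succ (Fin.succ_injective b)
  have hν : ∀ j, (η i : ℝ) * ν' j = η' i * ν j := by
    have hν : η i • ν' - η' i • ν = 0 := by
      refine eq_zero_of_sum_intCast_mul_eq_zero hω ?_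
      simp only [Pi.sub_apply, Pi.smul_apply, smul_eq_mul, Int.cast_sub, Int.cast_mul, sub_mul,
        Finset.sum_sub_distrib, mul_assoc, ← Finset.mul_sum]
      linarith [hνω i]
    exact fun j => by exact_mod_cast sub_eq_zero.1 (congrFun hν j)
  have hrel := LinearIndependent.pair_iff.1 hξ (-(η' i)) (η i) <| by
    ext (j | j) <;>
      simp only [Pi.add_apply, Pi.smul_apply, Sum.elim_inl, Sum.elim_inr, smul_eq_mul,
        Pi.zero_apply]
    · linarith [hν j]
    · linarith [hηη' i j]
  simp only [neg_eq_zero, Int.cast_eq_zero] at hrel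
  tauto

/-- Lemma 2.2 (T₊₊ case): if 1, ω_1,...,ω_b are ℚ-linearly independent,
ξ = (ν,η), ξ' = (ν',η') ∈ ℤ^b × ℤ² are linearly independent over ℝ, and
η, η' span a space of dimension exactly 1, then det T₊₊ ≠ 0. -/
theorem stmt3 (b : ℕ) (ω : Fin b → ℝ)
    (hindep : LinearIndependent ℚ (Fin.cons (1 : ℝ) ω : Fin (b + 1) → ℝ))
    (ν ν' : Fin b → ℤ) (η η' : Fin 2 → ℤ)
    (hξ : LinearIndependent ℝ
      ![Sum.elim (fun i => (ν i : ℝ)) (fun i => (η i : ℝ)),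
        Sum.elim (fun i => (ν' i : ℝ)) (fun i => (η' i : ℝ))])
    (hηdep : ¬ LinearIndependent ℝ ![(fun i => (η i : ℝ)), (fun i => (η' i : ℝ))])
    (hηne : η ≠ 0 ∨ η' ≠ 0) :
    Matrix.det
      !![(∑ i, (ν i : ℝ) * ω i) ^ 2 + (∑ i, (η i : ℝ) ^ 2),
         (∑ i, (ν i : ℝ) * ω i) * (∑ i, (ν' i : ℝ) * ω i) + (∑ i, (η i : ℝ) * (η' i : ℝ));
         (∑ i, (ν' i : ℝ) * ω i) * (∑ i, (ν i : ℝ) * ω i) + (∑ i, (η' i : ℝ) * (η i : ℝ)),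
         (∑ i, (ν' i : ℝ) * ω i) ^ 2 + (∑ i, (η' i : ℝ) ^ 2)] ≠ 0 :=
  stmt3_general b ω hindep ν ν' η η' hξ hηne
end

section
/- Let ω ∈ ℝ^b be such that 1, ω_1,...,ω_b are linearly independent over ℚ. Let ξ = (ν, η) and ξ' = (ν', η') in ℤ^b × ℤ^2 be linearly independent, with η, η' linearly dependent and not both zero. Then the 2×2 matrix T₊₋ with entries T₊₋[1,1] = (ν·ω)² − |η|², T₊₋[1,2] = (ν·ω)(ν'·ω) − η·η', T₊₋[2,1] = (ν'·ω)(ν·ω) − η'·η, T₊₋[2,2] = (ν'·ω)² − |η'|² has nonzero determinant. -/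
open Finset

lemma omega_aux {b : ℕ} {ω : Fin b → ℝ}
    (hindep : LinearIndependent ℚ (Fin.cons (1 : ℝ) ω : Fin (b + 1) → ℝ))
    (d : Fin b → ℤ) (h : (∑ i, (d i : ℝ) * ω i) = 0) : ∀ i, d i = 0 := by
  have H := Fintype.linearIndependent_iff.mp hindep
      (Fin.cons (0 : ℚ) (fun i => (d i : ℚ)))
  have hsum : (∑ i : Fin (b + 1),
      ((Fin.cons (0 : ℚ) (fun i => (d i : ℚ)) : Fin (b + 1) → ℚ) i) •
        ((Fin.cons (1 : ℝ) ω : Fin (b + 1) → ℝ) i)) = 0 := by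
    rw [Fin.sum_univ_succ]
    simp only [Fin.cons_zero, Fin.cons_succ, zero_smul, zero_add, Rat.smul_def]
    push_cast
    exact h
  intro i
  have := H hsum i.succ
  simpa using this

/-- Lemma 2.2 (T₊₋ case): if 1, ω_1,...,ω_b are ℚ-linearly independent,
ξ = (ν,η), ξ' = (ν',η') ∈ ℤ^b × ℤ² are linearly independent, and
η, η' are linearly dependent and not both zero, then det T₊₋ ≠ 0. -/
theorem stmt4 (b : ℕ) (ω : Fin b → ℝ)
    (hindep : LinearIndependent ℚ (Fin.cons (1 : ℝ) ω : Fin (b + 1) → ℝ))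
    (ν ν' : Fin b → ℤ) (η η' : Fin 2 → ℤ)
    (hξ : LinearIndependent ℝ
      ![Sum.elim (fun i => (ν i : ℝ)) (fun i => (η i : ℝ)),
        Sum.elim (fun i => (ν' i : ℝ)) (fun i => (η' i : ℝ))])
    (hηdep : ¬ LinearIndependent ℝ ![(fun i => (η i : ℝ)), (fun i => (η' i : ℝ))])
    (hηne : η ≠ 0 ∨ η' ≠ 0) :
    Matrix.det
      !![(∑ i, (ν i : ℝ) * ω i) ^ 2 - (∑ i, (η i : ℝ) ^ 2),
         (∑ i, (ν i : ℝ) * ω i) * (∑ i, (ν' i : ℝ) * ω i) - (∑ i, (η i : ℝ) * (η' i : ℝ));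
         (∑ i, (ν' i : ℝ) * ω i) * (∑ i, (ν i : ℝ) * ω i) - (∑ i, (η' i : ℝ) * (η i : ℝ)),
         (∑ i, (ν' i : ℝ) * ω i) ^ 2 - (∑ i, (η' i : ℝ) ^ 2)] ≠ 0 := by
  set A : ℝ := ∑ i, (ν i : ℝ) * ω i with hA
  set B : ℝ := ∑ i, (ν' i : ℝ) * ω i with hB
  rw [Matrix.det_fin_two_of]
  rcases eq_or_ne η 0 with hη0 | hη0
  · -- η = 0 case
    have hη' : η' ≠ 0 := hηne.resolve_left (not_not.mpr hη0)
    obtain ⟨j, hj⟩ := Function.ne_iff.mp hη'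
    have hr : (0 : ℝ) < ∑ k, (η' k : ℝ) ^ 2 := by
      have h1 : (0 : ℝ) < (η' j : ℝ) ^ 2 := by
        have : (η' j : ℝ) ≠ 0 := by exact_mod_cast hj
        positivity
      have h2 : (η' j : ℝ) ^ 2 ≤ ∑ k, (η' k : ℝ) ^ 2 :=
        Finset.single_le_sum (f := fun k => (η' k : ℝ) ^ 2) (fun k _ => sq_nonneg _) (mem_univ j)
      linarith
    have hAne : A ≠ 0 := by
      intro hA0
      have hν : ∀ i, ν i = 0 := omega_aux hindep ν hA0
      have H := Fintype.linearIndependent_iff.mp hξ ![(1 : ℝ), 0]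
      have hzero : (∑ k : Fin 2, (![(1 : ℝ), 0] : Fin 2 → ℝ) k •
          (![Sum.elim (fun i => (ν i : ℝ)) (fun i => (η i : ℝ)),
            Sum.elim (fun i => (ν' i : ℝ)) (fun i => (η' i : ℝ))] :
              Fin 2 → (Fin b ⊕ Fin 2 → ℝ)) k) = 0 := by
        rw [Fin.sum_univ_two]
        funext x
        rcases x with i | k
        · simp [hν i]
        · simp [hη0]
      have := H hzero 0
      norm_num at this
    have hq1 : (∑ k, (η k : ℝ) * (η' k : ℝ)) = 0 := by simp [hη0]
    have hq2 : (∑ k, (η' k : ℝ) * (η k : ℝ)) = 0 := by simp [hη0]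
    have hp : (∑ k, (η k : ℝ) ^ 2) = 0 := by simp [hη0]
    rw [hq1, hq2, hp]
    have key : (A ^ 2 - 0) * (B ^ 2 - ∑ k, (η' k : ℝ) ^ 2) - (A * B - 0) * (B * A - 0)
        = -(A ^ 2 * ∑ k, (η' k : ℝ) ^ 2) := by ring
    rw [key]
    exact neg_ne_zero.mpr (mul_ne_zero (pow_ne_zero 2 hAne) (ne_of_gt hr))
  · -- η ≠ 0 case
    obtain ⟨i, hi⟩ := Function.ne_iff.mp hη0
    have hiR : ((η i : ℝ)) ≠ 0 := by exact_mod_cast hi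
    -- extract dependence
    rw [LinearIndependent.pair_iff] at hηdep
    push_neg at hηdep
    obtain ⟨s, t, hst, hne⟩ := hηdep
    have hcomp : ∀ k, s * (η k : ℝ) + t * (η' k : ℝ) = 0 := by
      intro k
      have := congrFun hst k
      simpa using this
    have ht : t ≠ 0 := by
      intro ht0
      subst ht0
      have hs : s ≠ 0 := by
        intro hs0; exact (hne hs0) rfl
      have := hcomp i
      simp at this
      rcases this with h | h
      · exact hs h
      · exact hi h
    -- η' k = (m/n) * η k  with n = η i, m = η' i
    have hcross : ∀ k, (η' k : ℝ) * (η i : ℝ) = (η' i : ℝ) * (η k : ℝ) := by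
      intro k
      have h1 := hcomp k
      have h2 := hcomp i
      have : t * ((η' k : ℝ) * (η i : ℝ)) = t * ((η' i : ℝ) * (η k : ℝ)) := by
        linear_combination (η i : ℝ) * h1 - (η k : ℝ) * h2
      exact mul_left_cancel₀ ht this
    set c : ℝ := (η' i : ℝ) / (η i : ℝ) with hc
    have hc' : ∀ k, (η' k : ℝ) = c * (η k : ℝ) := by
      intro k
      rw [hc]
      field_simp
      linarith [hcross k]
    set p : ℝ := ∑ k, (η k : ℝ) ^ 2 with hpdef
    have hp : (0 : ℝ) < p := by
      have h1 : (0 : ℝ) < (η i : ℝ) ^ 2 := by positivity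
      have h2 : (η i : ℝ) ^ 2 ≤ p :=
        Finset.single_le_sum (f := fun k => (η k : ℝ) ^ 2) (fun k _ => sq_nonneg _) (mem_univ i)
      linarith
    have hq1 : (∑ k, (η k : ℝ) * (η' k : ℝ)) = c * p := by
      rw [hpdef, Finset.mul_sum]
      apply Finset.sum_congr rfl
      intro k _
      rw [hc' k]; ring
    have hq2 : (∑ k, (η' k : ℝ) * (η k : ℝ)) = c * p := by
      rw [hpdef, Finset.mul_sum]
      apply Finset.sum_congr rfl
      intro k _
      rw [hc' k]; ring
    have hr : (∑ k, (η' k : ℝ) ^ 2) = c ^ 2 * p := by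
      rw [hpdef, Finset.mul_sum]
      apply Finset.sum_congr rfl
      intro k _
      rw [hc' k]; ring
    rw [hq1, hq2, hr]
    have hcAB : c * A - B ≠ 0 := by
      intro h0
      -- m * A = n * B with m = η' i, n = η i
      have hmn : (η' i : ℝ) * A = (η i : ℝ) * B := by
        rw [hc] at h0
        field_simp at h0
        linarith [h0]
      -- integer relation
      have hsum0 : (∑ k, ((η' i * ν k - η i * ν' k : ℤ) : ℝ) * ω k) = 0 := by
        have : (∑ k, ((η' i * ν k - η i * ν' k : ℤ) : ℝ) * ω k)
            = (η' i : ℝ) * A - (η i : ℝ) * B := by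
          rw [hA, hB, Finset.mul_sum, Finset.mul_sum, ← Finset.sum_sub_distrib]
          apply Finset.sum_congr rfl
          intro k _
          push_cast
          ring
        rw [this, hmn]; ring
      have hν : ∀ k, η' i * ν k = η i * ν' k := by
        intro k
        have := omega_aux hindep _ hsum0 k
        omega
      have hηrel : ∀ k, η' i * η k = η i * η' k := by
        intro k
        have : ((η i : ℝ)) * (η' k : ℝ) = (η' i : ℝ) * (η k : ℝ) := by
          rw [hc' k, hc]; field_simp
        exact_mod_cast this.symm
      have H := Fintype.linearIndependent_iff.mp hξ ![(η' i : ℝ), -(η i : ℝ)]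
      have hzero : (∑ k : Fin 2, (![(η' i : ℝ), -(η i : ℝ)] : Fin 2 → ℝ) k •
          (![Sum.elim (fun i => (ν i : ℝ)) (fun i => (η i : ℝ)),
            Sum.elim (fun i => (ν' i : ℝ)) (fun i => (η' i : ℝ))] :
              Fin 2 → (Fin b ⊕ Fin 2 → ℝ)) k) = 0 := by
        rw [Fin.sum_univ_two]
        funext x
        rcases x with k | k
        · have : ((η' i * ν k : ℤ) : ℝ) = ((η i * ν' k : ℤ) : ℝ) := by
            exact_mod_cast congrArg (Int.cast : ℤ → ℝ) (hν k)
          push_cast at this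
          simp only [Matrix.cons_val_zero, Matrix.cons_val_one, Matrix.head_cons,
            Pi.add_apply, Pi.smul_apply, Sum.elim_inl, smul_eq_mul, Pi.zero_apply]
          linarith
        · have : ((η' i * η k : ℤ) : ℝ) = ((η i * η' k : ℤ) : ℝ) := by
            exact_mod_cast congrArg (Int.cast : ℤ → ℝ) (hηrel k)
          push_cast at this
          simp only [Matrix.cons_val_zero, Matrix.cons_val_one, Matrix.head_cons,
            Pi.add_apply, Pi.smul_apply, Sum.elim_inr, smul_eq_mul, Pi.zero_apply]
          linarith
      have := H hzero 1
      simp at this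
      exact hi this
    have key : (A ^ 2 - p) * (B ^ 2 - c ^ 2 * p) - (A * B - c * p) * (B * A - c * p)
        = -(p * (c * A - B) ^ 2) := by ring
    rw [key]
    exact neg_ne_zero.mpr (mul_ne_zero (ne_of_gt hp) (pow_ne_zero 2 hcAB))
end

section
/- Let j_1, j_2 ∈ ℤ² be nonzero and set ω_1 = √(j_1²+1), ω_2 = √(j_2²+1). Let ν = (ν_1, 0,...,0) and ν' = (0, ν'_2, 0,...,0) in ℤ^b with ν_1 ≠ 0 and ν'_2 ≠ 0, and let η = ν_1 j_1, η' = ν'_2 j_2. Suppose η·η' = 0 (i.e., j_1·j_2 = 0). Then the determinant of the 2×2 matrix T₊₋ (with entries (ν·ω)² − |η|², (ν·ω)(ν'·ω) − η·η', its transpose entry, (ν'·ω)² − |η'|²) equals −ν_1² ν'_2² (j_1² j_2² + j_1² + j_2²), which is nonzero. -/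
/-- Case (A), final subcase: ν = ν₁e₁, ν' = ν'₂e₂, η = ν₁j₁, η' = ν'₂j₂ with
j₁·j₂ = 0; then det T₊₋ = −ν₁²ν'₂²(j₁²j₂² + j₁² + j₂²) ≠ 0. -/
theorem stmt6 (b : ℕ) (hb : 2 ≤ b) (j1 j2 : Fin 2 → ℤ) (hj1 : j1 ≠ 0) (hj2 : j2 ≠ 0)
    (ω : Fin b → ℝ)
    (hω1 : ω ⟨0, by omega⟩ = Real.sqrt ((∑ i, (j1 i : ℝ) ^ 2) + 1))
    (hω2 : ω ⟨1, by omega⟩ = Real.sqrt ((∑ i, (j2 i : ℝ) ^ 2) + 1))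
    (n1 n2 : ℤ) (hn1 : n1 ≠ 0) (hn2 : n2 ≠ 0)
    (ν ν' : Fin b → ℤ)
    (hν : ν = Pi.single ⟨0, by omega⟩ n1) (hν' : ν' = Pi.single ⟨1, by omega⟩ n2)
    (η η' : Fin 2 → ℤ) (hη : η = n1 • j1) (hη' : η' = n2 • j2)
    (horth : (∑ i, j1 i * j2 i) = 0) :
    Matrix.det
      !![(∑ i, (ν i : ℝ) * ω i) ^ 2 - (∑ i, (η i : ℝ) ^ 2),
         (∑ i, (ν i : ℝ) * ω i) * (∑ i, (ν' i : ℝ) * ω i) - (∑ i, (η i : ℝ) * (η' i : ℝ));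
         (∑ i, (ν' i : ℝ) * ω i) * (∑ i, (ν i : ℝ) * ω i) - (∑ i, (η' i : ℝ) * (η i : ℝ)),
         (∑ i, (ν' i : ℝ) * ω i) ^ 2 - (∑ i, (η' i : ℝ) ^ 2)]
      = -((n1 : ℝ) ^ 2 * (n2 : ℝ) ^ 2 *
          ((∑ i, (j1 i : ℝ) ^ 2) * (∑ i, (j2 i : ℝ) ^ 2)
            + (∑ i, (j1 i : ℝ) ^ 2) + (∑ i, (j2 i : ℝ) ^ 2)))
    ∧ Matrix.det
      !![(∑ i, (ν i : ℝ) * ω i) ^ 2 - (∑ i, (η i : ℝ) ^ 2),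
         (∑ i, (ν i : ℝ) * ω i) * (∑ i, (ν' i : ℝ) * ω i) - (∑ i, (η i : ℝ) * (η' i : ℝ));
         (∑ i, (ν' i : ℝ) * ω i) * (∑ i, (ν i : ℝ) * ω i) - (∑ i, (η' i : ℝ) * (η i : ℝ)),
         (∑ i, (ν' i : ℝ) * ω i) ^ 2 - (∑ i, (η' i : ℝ) ^ 2)] ≠ 0 := by
  subst hν hν' hη hη'
  have hs : ∀ (k : Fin b) (n : ℤ),
      (∑ i, ((Pi.single k n : Fin b → ℤ) i : ℝ) * ω i) = (n : ℝ) * ω k := by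
    intro k n
    rw [Finset.sum_eq_single k]
    · simp
    · intro i _ hik; simp [Pi.single_apply, hik]
    · simp
  set J1 : ℝ := ∑ i, (j1 i : ℝ) ^ 2 with hJ1
  set J2 : ℝ := ∑ i, (j2 i : ℝ) ^ 2 with hJ2
  have hη2 : (∑ i, ((n1 • j1) i : ℝ) ^ 2) = (n1 : ℝ) ^ 2 * J1 := by
    rw [hJ1, Finset.mul_sum]; congr 1; ext i; push_cast [Pi.smul_apply, smul_eq_mul]; ring
  have hη'2 : (∑ i, ((n2 • j2) i : ℝ) ^ 2) = (n2 : ℝ) ^ 2 * J2 := by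
    rw [hJ2, Finset.mul_sum]; congr 1; ext i; push_cast [Pi.smul_apply, smul_eq_mul]; ring
  have hcross : (∑ i, ((n1 • j1) i : ℝ) * ((n2 • j2) i : ℝ)) = 0 := by
    have : (∑ i, ((n1 • j1) i : ℝ) * ((n2 • j2) i : ℝ))
        = (n1 : ℝ) * n2 * ((∑ i, j1 i * j2 i : ℤ) : ℝ) := by
      push_cast [Finset.mul_sum]
      congr 1; ext i; push_cast [Pi.smul_apply, smul_eq_mul]; ring
    rw [this, horth]; simp
  have hcross' : (∑ i, ((n2 • j2) i : ℝ) * ((n1 • j1) i : ℝ)) = 0 := by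
    rw [← hcross]; congr 1; ext i; ring
  have hJ1pos : 0 < J1 := by
    obtain ⟨i, hi⟩ := Function.ne_iff.mp hj1
    apply Finset.sum_pos' (fun i _ => by positivity) ⟨i, Finset.mem_univ i, by
      have : (j1 i : ℝ) ≠ 0 := by exact_mod_cast hi
      positivity⟩
  have hJ2pos : 0 < J2 := by
    obtain ⟨i, hi⟩ := Function.ne_iff.mp hj2
    apply Finset.sum_pos' (fun i _ => by positivity) ⟨i, Finset.mem_univ i, by
      have : (j2 i : ℝ) ≠ 0 := by exact_mod_cast hi
      positivity⟩
  have hsq1 : Real.sqrt (J1 + 1) ^ 2 = J1 + 1 := Real.sq_sqrt (by linarith)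
  have hsq2 : Real.sqrt (J2 + 1) ^ 2 = J2 + 1 := Real.sq_sqrt (by linarith)
  have hdet : Matrix.det
      !![((n1:ℝ) * ω ⟨0, by omega⟩) ^ 2 - (n1:ℝ)^2 * J1,
         ((n1:ℝ) * ω ⟨0, by omega⟩) * ((n2:ℝ) * ω ⟨1, by omega⟩) - 0;
         ((n2:ℝ) * ω ⟨1, by omega⟩) * ((n1:ℝ) * ω ⟨0, by omega⟩) - 0,
         ((n2:ℝ) * ω ⟨1, by omega⟩) ^ 2 - (n2:ℝ)^2 * J2]
      = -((n1 : ℝ) ^ 2 * (n2 : ℝ) ^ 2 * (J1 * J2 + J1 + J2)) := by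
    rw [Matrix.det_fin_two_of]
    have e1 : ((n1:ℝ) * ω ⟨0, by omega⟩) ^ 2 = (n1:ℝ)^2 * (J1 + 1) := by
      rw [hω1, mul_pow, hsq1]
    have e2 : ((n2:ℝ) * ω ⟨1, by omega⟩) ^ 2 = (n2:ℝ)^2 * (J2 + 1) := by
      rw [hω2, mul_pow, hsq2]
    have e3 : ((n1:ℝ) * ω ⟨0, by omega⟩ * ((n2:ℝ) * ω ⟨1, by omega⟩))
        * ((n2:ℝ) * ω ⟨1, by omega⟩ * ((n1:ℝ) * ω ⟨0, by omega⟩))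
        = (n1:ℝ)^2 * (n2:ℝ)^2 * ((J1+1) * (J2+1)) := by
      calc ((n1:ℝ) * ω ⟨0, by omega⟩ * ((n2:ℝ) * ω ⟨1, by omega⟩))
            * ((n2:ℝ) * ω ⟨1, by omega⟩ * ((n1:ℝ) * ω ⟨0, by omega⟩))
          = ((n1:ℝ) * ω ⟨0, by omega⟩) ^ 2 * ((n2:ℝ) * ω ⟨1, by omega⟩) ^ 2 := by ring
        _ = (n1:ℝ)^2 * (n2:ℝ)^2 * ((J1+1) * (J2+1)) := by rw [e1, e2]; ring
    linear_combination (((n2:ℝ) * ω ⟨1, by omega⟩) ^ 2 - (n2:ℝ)^2 * J2) * e1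
      + (n1:ℝ)^2 * e2 - e3
  rw [hs, hs, hη2, hη'2, hcross, hcross']
  constructor
  · exact hdet
  · rw [hdet]
    have hn1' : (n1 : ℝ) ≠ 0 := by exact_mod_cast hn1
    have hn2' : (n2 : ℝ) ≠ 0 := by exact_mod_cast hn2
    have : 0 < J1 * J2 + J1 + J2 := by positivity
    intro h
    have h1 : (0:ℝ) < (n1:ℝ)^2 := by positivity
    have h2 : (0:ℝ) < (n2:ℝ)^2 := by positivity
    nlinarith [mul_pos (mul_pos h1 h2) this]
end

section
/- Let A, Ω be real numbers with Ω² > 1, and suppose Ω is irrational while A is rational (more precisely: suppose 1 and Ω are linearly independent over ℚ and A ∈ ℚ). Let x, y be rational numbers satisfying (1 + x² − 2Ax + 2xΩ)(1 + y² − 2Ay + 2yΩ) = (1 + xy − (x+y)A + (x+y)Ω)². Then x = y. -/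
/-!
The difference of the two sides of the hypothesis factors as `(x - y)² (1 - (Ω - A)²)`.
The second factor cannot vanish: `Ω - A = ±1` would make `Ω` rational, contradicting the
`ℚ`-linear independence of `1` and `Ω`. Hence `x = y`.
-/

theorem mul_sub_sq_eq_sub_sq_mul_one_sub_sq {R : Type*} [CommRing R] (A x y Ω : R) :
    (1 + x ^ 2 - 2 * A * x + 2 * x * Ω) * (1 + y ^ 2 - 2 * A * y + 2 * y * Ω)
        - (1 + x * y - (x + y) * A + (x + y) * Ω) ^ 2
      = (x - y) ^ 2 * (1 - (Ω - A) ^ 2) := by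
  ring

theorem ne_algebraMap_of_linearIndependent {K L : Type*} [Field K] [Ring L] [Algebra K L]
    {ω : L} (h : LinearIndependent K ![1, ω]) (q : K) : ω ≠ algebraMap K L q := by
  intro hω
  have := LinearIndependent.pair_iff.mp h q (-1) (by simp [hω, Algebra.smul_def])
  simp at this

theorem sq_sub_algebraMap_ne_one_of_linearIndependent {K L : Type*} [Field K] [Ring L]
    [NoZeroDivisors L] [Algebra K L] {ω : L} (h : LinearIndependent K ![1, ω]) (a : K) :
    (ω - algebraMap K L a) ^ 2 ≠ 1 := by
  rw [Ne, sq_eq_one_iff, sub_eq_iff_eq_add, sub_eq_iff_eq_add, not_or]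
  constructor
  · simpa using ne_algebraMap_of_linearIndependent h (1 + a)
  · simpa using ne_algebraMap_of_linearIndependent h (-1 + a)

theorem stmt7_general (A x y : ℚ) (Ω : ℝ)
    (hindep : LinearIndependent ℚ ![(1 : ℝ), Ω])
    (heq : (1 + (x : ℝ) ^ 2 - 2 * (A : ℝ) * (x : ℝ) + 2 * (x : ℝ) * Ω)
            * (1 + (y : ℝ) ^ 2 - 2 * (A : ℝ) * (y : ℝ) + 2 * (y : ℝ) * Ω)
         = (1 + (x : ℝ) * (y : ℝ) - ((x : ℝ) + (y : ℝ)) * (A : ℝ)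
            + ((x : ℝ) + (y : ℝ)) * Ω) ^ 2) :
    x = y := by
  have hfactor := mul_sub_sq_eq_sub_sq_mul_one_sub_sq (A : ℝ) x y Ω
  rw [heq, sub_self] at hfactor
  have hΩ : 1 - (Ω - A) ^ 2 ≠ 0 :=
    sub_ne_zero.mpr (sq_sub_algebraMap_ne_one_of_linearIndependent hindep A).symm
  have hxy : ((x : ℝ) - y) ^ 2 = 0 := (mul_eq_zero.mp hfactor.symm).resolve_right hΩ
  exact_mod_cast sub_eq_zero.mp (pow_eq_zero_iff two_ne_zero |>.mp hxy)

/-- Case (B2) key identity: if Ω² > 1, Ω² ∈ ℚ, {1, Ω} is ℚ-linearly independent,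
A, x, y ∈ ℚ, and (1+x²−2Ax+2xΩ)(1+y²−2Ay+2yΩ) = (1+xy−(x+y)A+(x+y)Ω)², then x = y. -/
theorem stmt7 (A x y : ℚ) (Ω : ℝ) (hΩ : Ω ^ 2 > 1)
    (hΩQ : ∃ q : ℚ, Ω ^ 2 = (q : ℝ))
    (hindep : LinearIndependent ℚ ![(1 : ℝ), Ω])
    (heq : (1 + (x : ℝ) ^ 2 - 2 * (A : ℝ) * (x : ℝ) + 2 * (x : ℝ) * Ω)
            * (1 + (y : ℝ) ^ 2 - 2 * (A : ℝ) * (y : ℝ) + 2 * (y : ℝ) * Ω)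
         = (1 + (x : ℝ) * (y : ℝ) - ((x : ℝ) + (y : ℝ)) * (A : ℝ)
            + ((x : ℝ) + (y : ℝ)) * Ω) ^ 2) :
    x = y :=
  stmt7_general A x y Ω hindep heq
end

section
/- Let ν = (ν_1, ν_2, ν_3) and ν' = (ν'_1, ν'_2, ν'_3) be vectors in ℝ³ (or ℤ³) with ν_1, ν_2, ν_3 all nonzero and ν'_3 ≠ 0. Suppose there exist real numbers α, β, not both zero, such that ν_1ν_2 = αν_2ν_3 + βν_3ν_1, ν'_1ν'_2 = αν'_2ν'_3 + βν'_3ν'_1, and ν_1ν'_2 + ν'_1ν_2 = α(ν_2ν'_3 + ν'_2ν_3) + β(ν_3ν'_1 + ν'_3ν_1). Then ν_1/ν_3 = ν'_1/ν'_3 or ν_2/ν_3 = ν'_2/ν'_3. -/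
/-- Case (B3)(ia) dichotomy: the three bilinear relations with (α, β) ≠ 0 force
ν₁/ν₃ = ν'₁/ν'₃ or ν₂/ν₃ = ν'₂/ν'₃. -/
theorem stmt9 (ν1 ν2 ν3 ν1' ν2' ν3' α β : ℝ)
    (h1 : ν1 ≠ 0) (h2 : ν2 ≠ 0) (h3 : ν3 ≠ 0) (h3' : ν3' ≠ 0)
    (hαβ : (α, β) ≠ 0)
    (e1 : ν1 * ν2 = α * (ν2 * ν3) + β * (ν3 * ν1))
    (e2 : ν1' * ν2' = α * (ν2' * ν3') + β * (ν3' * ν1'))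
    (e3 : ν1 * ν2' + ν1' * ν2
        = α * (ν2 * ν3' + ν2' * ν3) + β * (ν3 * ν1' + ν3' * ν1)) :
    ν1 / ν3 = ν1' / ν3' ∨ ν2 / ν3 = ν2' / ν3' := by
  have key : (ν1 * ν3' - ν1' * ν3) * (ν2 * ν3' - ν2' * ν3) = 0 := by
    linear_combination ν3' ^ 2 * e1 + ν3 ^ 2 * e2 - ν3 * ν3' * e3
  rcases mul_eq_zero.mp key with h | h
  · left
    rw [div_eq_div_iff h3 h3']
    linarith
  · right
    rw [div_eq_div_iff h3 h3']
    linarith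
end

section
/- Let ν, ν' ∈ ℤ^b be linearly independent vectors (over ℚ), and η, η' ∈ ℤ² with η ≠ 0 or η' ≠ 0, and let ω' ∈ ℝ^b. Define P₂(ω') = −|η(ν'·ω') − η'(ν·ω')|² (the negative squared Euclidean norm of the ℤ²-valued expression η(ν'·ω') − η'(ν·ω')). Then there exists an index k ∈ {1,...,b} such that the second partial derivative ∂²P₂/∂ω'_k² = −2|ην'_k − η'ν_k|² is nonzero, provided (ν, η) and (ν', η') are linearly independent and lie in the submodule 𝒰 generated by {(-e_k, j_k)} for nonzero j_1,...,j_b ∈ ℤ². -/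
/-- For (ν, η), (ν', η') linearly independent in the submodule 𝒰 generated by
{(-e_k, j_k)} ⊆ ℤ^b × ℤ², there exists k such that
∂²P₂/∂ω'ₖ² = −2|ην'ₖ − η'νₖ|² ≠ 0. -/
theorem stmt19 (b : ℕ) (j : Fin b → Fin 2 → ℤ) (hj : ∀ k, j k ≠ 0)
    (U : Submodule ℤ ((Fin b → ℤ) × (Fin 2 → ℤ)))
    (hU : U = Submodule.span ℤ
      (Set.range fun k : Fin b => ((-(Pi.single k 1) : Fin b → ℤ), j k)))
    (ν ν' : Fin b → ℤ) (η η' : Fin 2 → ℤ)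
    (hmem : (ν, η) ∈ U) (hmem' : (ν', η') ∈ U)
    (hne : η ≠ 0 ∨ η' ≠ 0)
    (hξ : LinearIndependent ℚ
      ![Sum.elim (fun k => (ν k : ℚ)) (fun i => (η i : ℚ)),
        Sum.elim (fun k => (ν' k : ℚ)) (fun i => (η' i : ℚ))]) :
    ∃ k, (-2 : ℝ) * (∑ i, ((η i * ν' k - η' i * ν k : ℤ) : ℝ) ^ 2) ≠ 0 := by
  by_contra h
  push_neg at h
  -- Step 1: all cross terms vanish
  have hkey : ∀ k i, η i * ν' k = η' i * ν k := by
    intro k i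
    have hk := h k
    have hsum : (∑ i, ((η i * ν' k - η' i * ν k : ℤ) : ℝ) ^ 2) = 0 := by linarith
    have h0 := (Finset.sum_eq_zero_iff_of_nonneg
      (fun i _ => sq_nonneg _)).mp hsum i (Finset.mem_univ i)
    have h1 : ((η i * ν' k - η' i * ν k : ℤ) : ℝ) = 0 := by
      exact pow_eq_zero_iff (by norm_num) |>.mp h0
    have : (η i * ν' k - η' i * ν k : ℤ) = 0 := by exact_mod_cast h1
    linarith
  -- Step 2: characterize elements of U
  have hchar : ∀ p : (Fin b → ℤ) × (Fin 2 → ℤ), p ∈ U →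
      ∀ i, p.2 i = -∑ k, p.1 k * j k i := by
    subst hU
    intro p hp
    induction hp using Submodule.span_induction with
    | mem x hx =>
      obtain ⟨k, rfl⟩ := hx
      intro i
      simp [Pi.single_apply, neg_mul, Finset.sum_ite_eq']
    | zero => intro i; simp
    | add x y hx hy ihx ihy =>
      intro i
      simp only [Prod.snd_add, Pi.add_apply, ihx i, ihy i, Prod.fst_add,
        add_mul, Finset.sum_add_distrib]
      ring
    | smul c x hx ihx =>
      intro i
      simp only [Prod.smul_snd, Pi.smul_apply, smul_eq_mul, ihx i,
        Prod.smul_fst, Finset.mul_sum, mul_neg, mul_assoc]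
  have hη : ∀ m, η m = -∑ k, ν k * j k m := hchar (ν, η) hmem
  have hη' : ∀ m, η' m = -∑ k, ν' k * j k m := hchar (ν', η') hmem'
  -- Step 3: the scalar relation
  set v := Sum.elim (fun k => (ν k : ℚ)) (fun i => (η i : ℚ)) with hv
  set w := Sum.elim (fun k => (ν' k : ℚ)) (fun i => (η' i : ℚ)) with hw
  have hrel : ∀ i, (η i : ℚ) • w = (η' i : ℚ) • v := by
    intro i
    funext x
    cases x with
    | inl k =>
      simp only [hv, hw, Pi.smul_apply, Sum.elim_inl, smul_eq_mul]
      exact_mod_cast congrArg (fun z : ℤ => (z : ℚ)) (hkey k i)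
    | inr m =>
      simp only [hv, hw, Pi.smul_apply, Sum.elim_inr, smul_eq_mul]
      have key : η i * η' m = η' i * η m := by
        rw [hη m, hη' m, mul_neg, mul_neg, Finset.mul_sum, Finset.mul_sum]
        congr 1
        apply Finset.sum_congr rfl
        intro k _
        rw [← mul_assoc, ← mul_assoc, hkey k i]
      exact_mod_cast congrArg (fun z : ℤ => (z : ℚ)) key
  rw [show (![Sum.elim (fun k => (ν k : ℚ)) (fun i => (η i : ℚ)),
        Sum.elim (fun k => (ν' k : ℚ)) (fun i => (η' i : ℚ))]) = ![v, w] from rfl,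
    linearIndependent_fin2] at hξ
  obtain ⟨hw0, hvw⟩ := hξ
  by_cases hη'0 : ∃ i, η' i ≠ 0
  · obtain ⟨i, hi⟩ := hη'0
    apply hvw ((η i : ℚ) / (η' i : ℚ))
    have hr := hrel i
    have hiq : (η' i : ℚ) ≠ 0 := Int.cast_ne_zero.mpr hi
    show ((η i : ℚ) / (η' i : ℚ)) • w = v
    rw [div_eq_mul_inv, mul_comm, mul_smul, hr, inv_smul_smul₀ hiq]
  · push_neg at hη'0
    have hη'z : η' = 0 := funext hη'0
    have hηnz : η ≠ 0 := by
      rcases hne with h1 | h1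
      · exact h1
      · exact absurd hη'z h1
    obtain ⟨i, hi⟩ : ∃ i, η i ≠ 0 := by
      by_contra hc
      push_neg at hc
      exact hηnz (funext hc)
    apply hw0
    have := hrel i
    rw [hη'0 i] at this
    simp only [Int.cast_zero, zero_smul] at this
    have hiq : (η i : ℚ) ≠ 0 := Int.cast_ne_zero.mpr hi
    exact (smul_eq_zero.mp this).resolve_left hiq
end
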